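/- If μ is a probability measure on Aⁿ, U ⊆ Aⁿ with μ(U) > 0, then TC(μ(·|U)) ≤ (TC(μ) + log 2)/μ(U). -/

import Mathlib

/-!
Let `m = ⊗ᵢ μᵢ` be the product of the marginals of `μ` and `D` the relative entropy. Then
`TC(μ) = D(μ ‖ m)`, while for `ν ≪ μ` one has `TC(ν) ≤ D(ν ‖ m)`, the difference being
`∑ᵢ D(νᵢ ‖ μᵢ) ≥ 0`. For `ν = μ(·|U)` and `p = μ(U)`, the part of `D(μ ‖ m)` over `U` equals
`p D(ν ‖ m) + p log p`, and since `m(Uᶜ) ≤ 1` the log-sum inequality bounds the part over `Uᶜ`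
below by `(1 - p) log (1 - p)`. Hence `p D(ν ‖ m) ≤ D(μ ‖ m) + h(p) ≤ TC(μ) + log 2`.
-/

open Finset

def IsPMF {S : Type*} [Fintype S] (p : S → ℝ) : Prop :=
  (∀ s, 0 ≤ p s) ∧ ∑ s, p s = 1

noncomputable def entropy {S : Type*} [Fintype S] (p : S → ℝ) : ℝ :=
  ∑ s, Real.negMulLog (p s)

noncomputable def marginal {A : Type*} [Fintype A] [DecidableEq A] {n : ℕ}
    (μ : (Fin n → A) → ℝ) (i : Fin n) : A → ℝ :=
  fun a => ∑ x : Fin n → A, if x i = a then μ x else 0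

noncomputable def totalCorr {A : Type*} [Fintype A] [DecidableEq A] {n : ℕ}
    (μ : (Fin n → A) → ℝ) : ℝ :=
  (∑ i, entropy (marginal μ i)) - entropy μ

open Real

noncomputable def relEntropy {S : Type*} [Fintype S] (p q : S → ℝ) : ℝ :=
  ∑ s, p s * (log (p s) - log (q s))

noncomputable def condOn {S : Type*} [DecidableEq S] (μ : S → ℝ) (U : Finset S) : S → ℝ :=
  fun x => if x ∈ U then μ x / ∑ y ∈ U, μ y else 0

theorem sum_mul_log_self_eq_neg_entropy {S : Type*} [Fintype S] (p : S → ℝ) :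
    ∑ s, p s * log (p s) = -entropy p := by
  simp only [entropy, negMulLog, neg_mul, sum_neg_distrib, neg_neg]

theorem mul_log_le_mul_log_sub_add {a b c : ℝ} (ha : 0 ≤ a) (hb : 0 ≤ b) (hab : 0 < a → 0 < b)
    (hac : a ≤ c) : a * log c ≤ a * (log a - log b) + b * c - a := by
  rcases ha.eq_or_lt with rfl | ha
  · simpa using mul_nonneg hb hac
  have hb := hab ha
  have hc := ha.trans_le hac
  have hlog : log (b * c / a) ≤ b * c / a - 1 := log_le_sub_one_of_pos (by positivity)
  rw [log_div (by positivity) ha.ne', log_mul hb.ne' hc.ne'] at hlog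
  have := mul_le_mul_of_nonneg_left hlog ha.le
  rw [mul_sub a (b * c / a), mul_div_cancel₀ _ ha.ne'] at this
  linarith

/-- The log-sum inequality against a sub-probability weight `b`. -/
theorem mul_log_sum_le_sum_mul_log_sub {ι : Type*} (S : Finset ι) {a b : ι → ℝ}
    (ha : ∀ x ∈ S, 0 ≤ a x) (hb : ∀ x ∈ S, 0 ≤ b x) (hab : ∀ x ∈ S, 0 < a x → 0 < b x)
    (hb1 : ∑ x ∈ S, b x ≤ 1) :
    (∑ x ∈ S, a x) * log (∑ x ∈ S, a x) ≤ ∑ x ∈ S, a x * (log (a x) - log (b x)) := by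
  set c := ∑ x ∈ S, a x
  have hc : 0 ≤ c := sum_nonneg ha
  have key : ∀ x ∈ S, a x * log c ≤ a x * (log (a x) - log (b x)) + b x * c - a x :=
    fun x hx => mul_log_le_mul_log_sub_add (ha x hx) (hb x hx) (hab x hx) (single_le_sum ha hx)
  calc c * log c = ∑ x ∈ S, a x * log c := by rw [sum_mul]
    _ ≤ ∑ x ∈ S, (a x * (log (a x) - log (b x)) + b x * c - a x) := sum_le_sum key
    _ = ∑ x ∈ S, a x * (log (a x) - log (b x)) + ((∑ x ∈ S, b x) * c - c) := by
      rw [sum_sub_distrib, sum_add_distrib, sum_mul]; ring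
    _ ≤ ∑ x ∈ S, a x * (log (a x) - log (b x)) := by nlinarith

theorem relEntropy_nonneg {S : Type*} [Fintype S] {p q : S → ℝ} (hp : IsPMF p)
    (hq : ∀ s, 0 ≤ q s) (hq1 : ∑ s, q s ≤ 1) (hpq : ∀ s, 0 < p s → 0 < q s) :
    0 ≤ relEntropy p q := by
  simpa [relEntropy, hp.2] using
    mul_log_sum_le_sum_mul_log_sub univ (fun s _ => hp.1 s) (fun s _ => hq s) (fun s _ => hpq s) hq1

section Marginal

variable {A : Type*} [Fintype A] [DecidableEq A] {n : ℕ}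

theorem sum_marginal_mul (w : (Fin n → A) → ℝ) (i : Fin n) (g : A → ℝ) :
    ∑ a, marginal w i a * g a = ∑ x, w x * g (x i) := by
  simp only [marginal, sum_mul, ite_mul, zero_mul]
  rw [sum_comm]
  simp

theorem sum_marginal (w : (Fin n → A) → ℝ) (i : Fin n) : ∑ a, marginal w i a = ∑ x, w x := by
  simpa using sum_marginal_mul w i 1

theorem marginal_nonneg {w : (Fin n → A) → ℝ} (hw : ∀ x, 0 ≤ w x) (i : Fin n) (a : A) :
    0 ≤ marginal w i a :=
  sum_nonneg fun x _ => by split_ifs <;> simp [hw x]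

theorem le_marginal {w : (Fin n → A) → ℝ} (hw : ∀ x, 0 ≤ w x) (i : Fin n) (x : Fin n → A) :
    w x ≤ marginal w i (x i) := by
  simpa [marginal] using single_le_sum (f := fun y => if y i = x i then w y else 0)
    (fun y _ => by split_ifs <;> simp [hw y]) (mem_univ x)

theorem IsPMF.marginal {μ : (Fin n → A) → ℝ} (hμ : IsPMF μ) (i : Fin n) :
    IsPMF (marginal μ i) :=
  ⟨marginal_nonneg hμ.1 i, by rw [sum_marginal, hμ.2]⟩

theorem marginal_pos_of_pos {ν μ : (Fin n → A) → ℝ} (hν : ∀ x, 0 ≤ ν x) (hμ : ∀ x, 0 ≤ μ x)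
    (hνμ : ∀ x, 0 < ν x → 0 < μ x) (i : Fin n) (a : A) (ha : 0 < marginal ν i a) :
    0 < marginal μ i a := by
  obtain ⟨x, -, hx⟩ := exists_ne_zero_of_sum_ne_zero ha.ne'
  have hxa : x i = a := by by_contra h; simp [h] at hx
  subst hxa
  simp only [ite_true] at hx
  exact (hνμ x ((hν x).lt_of_ne' hx)).trans_le (le_marginal hμ i x)

end Marginal

section ProdMarginal

variable {A : Type*} [Fintype A] [DecidableEq A] {n : ℕ}

noncomputable def prodMarginal (μ : (Fin n → A) → ℝ) (x : Fin n → A) : ℝ :=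
  ∏ i, marginal μ i (x i)

theorem prodMarginal_nonneg {μ : (Fin n → A) → ℝ} (hμ : ∀ x, 0 ≤ μ x) (x : Fin n → A) :
    0 ≤ prodMarginal μ x :=
  prod_nonneg fun i _ => marginal_nonneg hμ i (x i)

theorem prodMarginal_pos {μ : (Fin n → A) → ℝ} (hμ : ∀ x, 0 ≤ μ x) {x : Fin n → A}
    (hx : 0 < μ x) : 0 < prodMarginal μ x :=
  prod_pos fun i _ => hx.trans_le (le_marginal hμ i x)

theorem sum_prodMarginal {μ : (Fin n → A) → ℝ} (hμ : IsPMF μ) : ∑ x, prodMarginal μ x = 1 := by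
  simp [prodMarginal, ← Fintype.prod_sum, (hμ.marginal _).2]

theorem sum_mul_log_prodMarginal {ν μ : (Fin n → A) → ℝ} (hν : ∀ x, 0 ≤ ν x)
    (hμ : ∀ x, 0 ≤ μ x) (hνμ : ∀ x, 0 < ν x → 0 < μ x) :
    ∑ x, ν x * log (prodMarginal μ x) = ∑ i, ∑ a, marginal ν i a * log (marginal μ i a) := by
  have hlog : ∀ x, ν x * log (prodMarginal μ x) = ∑ i, ν x * log (marginal μ i (x i)) := by
    intro x
    rcases (hν x).eq_or_lt with hx | hx
    · simp [← hx]
    rw [prodMarginal, log_prod fun i _ => ((hνμ x hx).trans_le (le_marginal hμ i x)).ne',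
      mul_sum]
  simp only [hlog, sum_marginal_mul]
  exact sum_comm

theorem totalCorr_eq_relEntropy {μ : (Fin n → A) → ℝ} (hμ : ∀ x, 0 ≤ μ x) :
    totalCorr μ = relEntropy μ (prodMarginal μ) := by
  have hcross := sum_mul_log_prodMarginal hμ hμ fun _ h => h
  simp only [sum_mul_log_self_eq_neg_entropy, sum_neg_distrib] at hcross
  simp only [relEntropy, mul_sub, sum_sub_distrib, sum_mul_log_self_eq_neg_entropy, hcross,
    totalCorr]
  ring

theorem totalCorr_le_relEntropy {ν μ : (Fin n → A) → ℝ} (hν : IsPMF ν) (hμ : IsPMF μ)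
    (hνμ : ∀ x, 0 < ν x → 0 < μ x) :
    totalCorr ν ≤ relEntropy ν (prodMarginal μ) := by
  have hcross := sum_mul_log_prodMarginal hν.1 hμ.1 hνμ
  have hgibbs : ∀ i, 0 ≤ relEntropy (marginal ν i) (marginal μ i) := fun i =>
    relEntropy_nonneg (hν.marginal i) (hμ.marginal i).1 (hμ.marginal i).2.le
      (marginal_pos_of_pos hν.1 hμ.1 hνμ i)
  simp only [relEntropy, mul_sub, sum_sub_distrib, sum_mul_log_self_eq_neg_entropy,
    sub_nonneg] at hgibbs ⊢
  rw [hcross, totalCorr]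
  have := sum_le_sum fun i (_ : i ∈ univ) => hgibbs i
  rw [sum_neg_distrib] at this
  linarith

end ProdMarginal

section Conditioning

variable {S : Type*} [DecidableEq S] {μ : S → ℝ} {U : Finset S}

theorem isPMF_condOn [Fintype S] (hμ : IsPMF μ) (hU : 0 < ∑ x ∈ U, μ x) :
    IsPMF (condOn μ U) := by
  refine ⟨fun x => ?_, ?_⟩
  · unfold condOn
    split_ifs
    exacts [div_nonneg (hμ.1 x) hU.le, le_rfl]
  · simp only [condOn, sum_ite_mem, univ_inter, ← sum_div, div_self hU.ne']

theorem pos_of_condOn_pos (hU : 0 < ∑ x ∈ U, μ x) {x : S} (hx : 0 < condOn μ U x) : 0 < μ x := by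
  unfold condOn at hx
  split_ifs at hx
  exacts [(div_pos_iff_of_pos_right hU).1 hx, hx.false.elim]

theorem mul_relEntropy_condOn [Fintype S] (ρ : S → ℝ) (hU : 0 < ∑ x ∈ U, μ x) :
    (∑ x ∈ U, μ x) * relEntropy (condOn μ U) ρ =
      ∑ x ∈ U, μ x * (log (μ x) - log (ρ x)) - (∑ x ∈ U, μ x) * log (∑ x ∈ U, μ x) := by
  have hterm : ∀ x, (∑ y ∈ U, μ y) * (condOn μ U x * (log (condOn μ U x) - log (ρ x))) =
      if x ∈ U then μ x * (log (μ x) - log (ρ x)) - μ x * log (∑ y ∈ U, μ y) else 0 := by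
    intro x
    unfold condOn
    split_ifs
    · rcases eq_or_ne (μ x) 0 with hx | hx
      · simp [hx]
      rw [log_div hx hU.ne']
      field_simp
      ring
    · simp
  rw [relEntropy, mul_sum, sum_congr rfl fun x _ => hterm x, sum_ite_mem, univ_inter,
    sum_sub_distrib, ← sum_mul]

theorem relEntropy_condOn_le [Fintype S] (hμ : IsPMF μ) {ρ : S → ℝ} (hρ : ∀ x, 0 ≤ ρ x)
    (hρ1 : ∑ x, ρ x ≤ 1) (hμρ : ∀ x, 0 < μ x → 0 < ρ x) (hU : 0 < ∑ x ∈ U, μ x) :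
    relEntropy (condOn μ U) ρ ≤ (relEntropy μ ρ + binEntropy (∑ x ∈ U, μ x)) / ∑ x ∈ U, μ x := by
  set p := ∑ x ∈ U, μ x
  have hq : ∑ x ∈ Uᶜ, μ x = 1 - p := by rw [← hμ.2, ← sum_add_sum_compl U μ]; ring
  have hsplit := sum_add_sum_compl U fun x => μ x * (log (μ x) - log (ρ x))
  have hρU : ∑ x ∈ Uᶜ, ρ x ≤ 1 :=
    (sum_le_sum_of_subset_of_nonneg (subset_univ _) fun x _ _ => hρ x).trans hρ1
  have hcompl := mul_log_sum_le_sum_mul_log_sub Uᶜ (fun x _ => hμ.1 x) (fun x _ => hρ x)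
    (fun x _ => hμρ x) hρU
  rw [hq] at hcompl
  rw [le_div_iff₀ hU, mul_comm, mul_relEntropy_condOn ρ hU,
    binEntropy_eq_negMulLog_add_negMulLog_one_sub, relEntropy, ← hsplit]
  simp only [negMulLog]
  linarith

end Conditioning

/-- If `μ(U) > 0` then `TC(μ(·|U)) ≤ (TC(μ) + log 2)/μ(U)`. -/
theorem totalCorr_cond_le {A : Type*} [Fintype A] [DecidableEq A] {n : ℕ}
    (μ : (Fin n → A) → ℝ) (hμ : IsPMF μ) (U : Finset (Fin n → A))
    (hU : 0 < ∑ x ∈ U, μ x) :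
    totalCorr (fun x => if x ∈ U then μ x / (∑ y ∈ U, μ y) else 0) ≤
      (totalCorr μ + Real.log 2) / (∑ x ∈ U, μ x) := by
  calc totalCorr (condOn μ U)
      ≤ relEntropy (condOn μ U) (prodMarginal μ) :=
        totalCorr_le_relEntropy (isPMF_condOn hμ hU) hμ fun _ => pos_of_condOn_pos hU
    _ ≤ (relEntropy μ (prodMarginal μ) + binEntropy (∑ x ∈ U, μ x)) / ∑ x ∈ U, μ x :=
        relEntropy_condOn_le hμ (prodMarginal_nonneg hμ.1) (sum_prodMarginal hμ).le
          (fun _ => prodMarginal_pos hμ.1) hU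
    _ ≤ (totalCorr μ + log 2) / ∑ x ∈ U, μ x := by
        rw [← totalCorr_eq_relEntropy hμ.1]
        gcongr
        exact binEntropy_le_log_two
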